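/- arXiv:2402.01110 — 5 statements merged into one kernel-verified Lean document; each statement's English description precedes it below -/
import Mathlib

section
/- For every path f : I_m → G there exist an integer M ≥ m, a standard path f̂ : J_M → G, and a shrinking map h : J_M → I_m with f̂ = f ∘ h; consequently f̂ ≃¹ f. -/
/-- A digraph map between adjacency relations: every arrow goes to an arrow or collapses. -/
def IsDigraphMap {V W : Type*} (A : V → V → Prop) (B : W → W → Prop) (f : V → W) : Prop :=
  ∀ v w, A v w → B (f v) (f w) ∨ f v = f w

/-- Adjacency of the line digraph `I_n` with direction function `d`:
`d i = true` means arrow `i → i+1`, `d i = false` means arrow `i+1 → i`. -/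
def lineAdj (n : ℕ) (d : ℕ → Bool) : ℕ → ℕ → Prop :=
  fun i j => (j = i + 1 ∧ i < n ∧ d i = true) ∨ (i = j + 1 ∧ j < n ∧ d j = false)

/-- Directions of the standard line digraph `J_n`: arrow `i → i+1` iff `i` is even. -/
def Jdir : ℕ → Bool := fun i => decide (Even i)

/-- A shrinking map `h : I_N → I_m`: a monotone digraph map with `h 0 = 0` and `h N = m`. -/
def IsShrinking (N m : ℕ) (dN dm : ℕ → Bool) (h : ℕ → ℕ) : Prop :=
  IsDigraphMap (lineAdj N dN) (lineAdj m dm) h ∧ h 0 = 0 ∧ h N = m ∧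
    ∀ i j, i ≤ j → j ≤ N → h i ≤ h j

/-- Adjacency of the box product `G □ H`. -/
def boxAdj {V W : Type*} (A : V → V → Prop) (B : W → W → Prop) :
    V × W → V × W → Prop :=
  fun p q => (p.1 = q.1 ∧ B p.2 q.2) ∨ (A p.1 q.1 ∧ p.2 = q.2)

/-- Adjacency of the cylinder `C_h` of a map `h : I_M → I_m` between line digraphs. -/
def cylAdjLine (M m : ℕ) (dM dm : ℕ → Bool) (h : ℕ → ℕ) :
    ℕ ⊕ ℕ → ℕ ⊕ ℕ → Prop
  | Sum.inl i, Sum.inl j => lineAdj M dM i j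
  | Sum.inr i, Sum.inr j => lineAdj m dm i j
  | Sum.inl i, Sum.inr j => i ≤ M ∧ h i = j
  | Sum.inr _, Sum.inl _ => False

/-- auxiliary shrinking map `J_{2m} → I_m`. -/
def hstd (d : ℕ → Bool) (i : ℕ) : ℕ :=
  i / 2 + if i % 2 = 1 ∧ d (i / 2) = true then 1 else 0

lemma hstd_even (d : ℕ → Bool) (k : ℕ) : hstd d (2 * k) = k := by
  unfold hstd
  rw [if_neg (fun h => by omega : ¬((2 * k) % 2 = 1 ∧ d (2 * k / 2) = true))]
  omega

lemma hstd_odd (d : ℕ → Bool) (k : ℕ) :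
    hstd d (2 * k + 1) = k + if d k = true then 1 else 0 := by
  have h1 : (2 * k + 1) % 2 = 1 := by omega
  have h2 : (2 * k + 1) / 2 = k := by omega
  by_cases hd : d k = true <;> simp [hstd, h1, h2, hd]

lemma hstd_mono (d : ℕ → Bool) : Monotone (hstd d) := by
  apply monotone_nat_of_le_succ
  intro i
  rcases Nat.even_or_odd i with ⟨k, hk⟩ | ⟨k, hk⟩
  · subst hk
    rw [show k + k = 2 * k by ring, hstd_even, show 2*k+1 = 2*k+1 from rfl, hstd_odd]
    split <;> omega
  · subst hk
    rw [show 2*k+1+1 = 2*(k+1) by ring, hstd_even, hstd_odd]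
    split <;> omega

lemma hstd_shrink (d : ℕ → Bool) (m : ℕ) : IsShrinking (2*m) m Jdir d (hstd d) := by
  refine ⟨?_, ?_, ?_, fun i j hij _ => hstd_mono d hij⟩
  · intro v w hvw
    rcases hvw with ⟨hw, hv, hJ⟩ | ⟨hv, hw, hJ⟩
    · -- v even, w = v+1
      have hev : Even v := by simpa [Jdir] using hJ
      obtain ⟨k, hk⟩ := hev
      have hk2 : v = 2 * k := by omega
      subst hw; subst hk2
      rw [hstd_even, hstd_odd]
      by_cases hd : d k = true
      · left; left
        refine ⟨by simp [hd], by omega, hd⟩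
      · right; simp [hd]
    · -- w odd, v = w+1
      have hodd : ¬ Even w := by
        intro hE
        simp [Jdir, hE] at hJ
      obtain ⟨k, hk2⟩ := Nat.not_even_iff_odd.mp hodd
      subst hv; subst hk2
      rw [show 2*k+1+1 = 2*(k+1) by ring, hstd_even, hstd_odd]
      by_cases hd : d k = true
      · right; simp [hd]
      · left; right
        rw [if_neg hd]
        exact ⟨by omega, by omega, by simpa using hd⟩
  · simp [hstd]
  · rw [hstd_even]

/-- Every path `f : I_m → G` admits a standard representative: there is `M ≥ m` and a
shrinking map `h : J_M → I_m` so that the standard path `f̂ = f ∘ h` satisfies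
`f̂ ≃¹ f`, witnessed by a digraph map on the cylinder `C_h`. -/
theorem stmt6 {V : Type*} (A : V → V → Prop) (x : V) {m : ℕ} {d : ℕ → Bool}
    (f : ℕ → V) (hf : IsDigraphMap (lineAdj m d) A f) (hbase : f 0 = x) :
    ∃ M, m ≤ M ∧ ∃ h : ℕ → ℕ, IsShrinking M m Jdir d h ∧
      ∃ F : ℕ ⊕ ℕ → V, IsDigraphMap (cylAdjLine M m Jdir d h) A F ∧
        F ∘ Sum.inl = f ∘ h ∧ F ∘ Sum.inr = f := by
  refine ⟨2*m, by omega, hstd d, hstd_shrink d m, Sum.elim (f ∘ hstd d) f, ?_, rfl, rfl⟩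
  intro v w hvw
  match v, w with
  | Sum.inl i, Sum.inl j =>
    rcases (hstd_shrink d m).1 i j hvw with hA | hE
    · exact hf _ _ hA
    · right; simp [hE]
  | Sum.inl i, Sum.inr j =>
    right; simp [hvw.2.symm]
  | Sum.inr i, Sum.inl j => exact hvw.elim
  | Sum.inr i, Sum.inr j => exact hf _ _ hvw
end

section
/- Let f : J_m → G be a standard path and let f₁ = f ∘ h₁ and f₂ = f ∘ h₂ be two subdivisions of f via shrinking maps h₁ : J_{m₁} → J_m and h₂ : J_{m₂} → J_m. Then there exist M and shrinking maps q₁ : J_M → J_{m₁} and q₂ : J_M → J_{m₂} with h₁ ∘ q₁ = h₂ ∘ q₂; in particular f₁ ∘ q₁ = f₂ ∘ q₂ is a common subdivision of f₁ and f₂. -/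
namespace Stmt8Aux

lemma Jdir_true {a : ℕ} : Jdir a = true ↔ a % 2 = 0 := by
  simp [Jdir, Nat.even_iff]

lemma Jdir_false {a : ℕ} : Jdir a = false ↔ a % 2 = 1 := by
  simp [Jdir, Nat.even_iff]

/-- The step characterization of a shrinking map of standard line digraphs. -/
lemma shrink_step {h : ℕ → ℕ} {N m : ℕ} (hs : IsShrinking N m Jdir Jdir h) :
    ∀ a, a < N → h (a+1) = h a ∨ (h (a+1) = h a + 1 ∧ h a % 2 = a % 2 ∧ h a < m) := by
  obtain ⟨hmap, h0, hN, hmono⟩ := hs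
  intro a ha
  have hm : h a ≤ h (a+1) := hmono a (a+1) (by omega) (by omega)
  rcases Nat.even_or_odd a with he | ho
  · have hadj : lineAdj N Jdir a (a+1) := Or.inl ⟨rfl, ha, by simp [Jdir, he]⟩
    rcases hmap _ _ hadj with hB | hcol
    · rcases hB with ⟨e1, e2, e3⟩ | ⟨e1, e2, e3⟩
      · right
        refine ⟨e1, ?_, e2⟩
        have := Jdir_true.mp e3
        have := Nat.even_iff.mp he
        omega
      · omega
    · left; exact hcol.symm
  · have hadj : lineAdj N Jdir (a+1) a :=
      Or.inr ⟨rfl, ha, Jdir_false.mpr (Nat.odd_iff.mp ho)⟩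
    rcases hmap _ _ hadj with hB | hcol
    · rcases hB with ⟨e1, e2, e3⟩ | ⟨e1, e2, e3⟩
      · omega
      · right
        refine ⟨e1, ?_, e2⟩
        have := Jdir_false.mp e3
        have := Nat.odd_iff.mp ho
        omega
    · left; exact hcol

def mvA (h1 h2 : ℕ → ℕ) (m1 m2 i a b : ℕ) : Prop :=
  a < m1 ∧ a % 2 = i % 2 ∧ (h1 (a+1) = h1 a ∨
    (b < m2 ∧ b % 2 = i % 2 ∧ h2 (b+1) = h2 b + 1 ∧ h1 (a+1) = h1 a + 1))

def mvB (h1 h2 : ℕ → ℕ) (m1 m2 i a b : ℕ) : Prop :=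
  b < m2 ∧ b % 2 = i % 2 ∧ (h2 (b+1) = h2 b ∨
    (a < m1 ∧ a % 2 = i % 2 ∧ h1 (a+1) = h1 a + 1 ∧ h2 (b+1) = h2 b + 1))

open Classical in
noncomputable def FF (h1 h2 : ℕ → ℕ) (m1 m2 : ℕ) : ℕ → ℕ × ℕ
  | 0 => (0, 0)
  | i + 1 =>
    let p := FF h1 h2 m1 m2 i
    ((if mvA h1 h2 m1 m2 i p.1 p.2 then p.1 + 1 else p.1),
     (if mvB h1 h2 m1 m2 i p.1 p.2 then p.2 + 1 else p.2))

variable (h1 h2 : ℕ → ℕ) (m1 m2 : ℕ)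

open Classical in
lemma FF_succ (i : ℕ) :
    FF h1 h2 m1 m2 (i+1) =
      ((if mvA h1 h2 m1 m2 i (FF h1 h2 m1 m2 i).1 (FF h1 h2 m1 m2 i).2
          then (FF h1 h2 m1 m2 i).1 + 1 else (FF h1 h2 m1 m2 i).1),
       (if mvB h1 h2 m1 m2 i (FF h1 h2 m1 m2 i).1 (FF h1 h2 m1 m2 i).2
          then (FF h1 h2 m1 m2 i).2 + 1 else (FF h1 h2 m1 m2 i).2)) := by
  rw [FF]

lemma FF_fst_succ (i : ℕ) :
    (FF h1 h2 m1 m2 (i+1)).1 = (FF h1 h2 m1 m2 i).1 ∨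
      ((FF h1 h2 m1 m2 (i+1)).1 = (FF h1 h2 m1 m2 i).1 + 1 ∧
        mvA h1 h2 m1 m2 i (FF h1 h2 m1 m2 i).1 (FF h1 h2 m1 m2 i).2) := by
  classical
  rw [FF_succ]
  by_cases hA : mvA h1 h2 m1 m2 i (FF h1 h2 m1 m2 i).1 (FF h1 h2 m1 m2 i).2
  · right; simp [hA]
  · left; simp [hA]

lemma FF_snd_succ (i : ℕ) :
    (FF h1 h2 m1 m2 (i+1)).2 = (FF h1 h2 m1 m2 i).2 ∨
      ((FF h1 h2 m1 m2 (i+1)).2 = (FF h1 h2 m1 m2 i).2 + 1 ∧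
        mvB h1 h2 m1 m2 i (FF h1 h2 m1 m2 i).1 (FF h1 h2 m1 m2 i).2) := by
  classical
  rw [FF_succ]
  by_cases hB : mvB h1 h2 m1 m2 i (FF h1 h2 m1 m2 i).1 (FF h1 h2 m1 m2 i).2
  · right; simp [hB]
  · left; simp [hB]

lemma FF_fst_mono : ∀ i j, i ≤ j → (FF h1 h2 m1 m2 i).1 ≤ (FF h1 h2 m1 m2 j).1 := by
  intro i j hij
  induction j with
  | zero =>
    have : i = 0 := by omega
    simp [this]
  | succ k ih =>
    rcases Nat.lt_or_ge i (k+1) with hlt | hge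
    · have := ih (by omega)
      rcases FF_fst_succ h1 h2 m1 m2 k with h | ⟨h, _⟩ <;> omega
    · have : i = k + 1 := by omega
      simp [this]


lemma FF_snd_mono : ∀ i j, i ≤ j → (FF h1 h2 m1 m2 i).2 ≤ (FF h1 h2 m1 m2 j).2 := by
  intro i j hij
  induction j with
  | zero =>
    have : i = 0 := by omega
    simp [this]
  | succ k ih =>
    rcases Nat.lt_or_ge i (k+1) with hlt | hge
    · have := ih (by omega)
      rcases FF_snd_succ h1 h2 m1 m2 k with h | ⟨h, _⟩ <;> omega
    · have : i = k + 1 := by omega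
      simp [this]

variable {m : ℕ}

/-- The invariant: coordinates stay in range and the two images agree. -/
lemma FF_inv
    (E1 : ∀ a, a < m1 → h1 (a+1) = h1 a ∨ (h1 (a+1) = h1 a + 1 ∧ h1 a % 2 = a % 2 ∧ h1 a < m))
    (E2 : ∀ b, b < m2 → h2 (b+1) = h2 b ∨ (h2 (b+1) = h2 b + 1 ∧ h2 b % 2 = b % 2 ∧ h2 b < m))
    (h10 : h1 0 = 0) (h20 : h2 0 = 0) :
    ∀ i, (FF h1 h2 m1 m2 i).1 ≤ m1 ∧ (FF h1 h2 m1 m2 i).2 ≤ m2 ∧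
      h1 (FF h1 h2 m1 m2 i).1 = h2 (FF h1 h2 m1 m2 i).2 := by
  intro i
  induction i with
  | zero => simp [FF, h10, h20]
  | succ k ih =>
    classical
    obtain ⟨ha, hb, heq⟩ := ih
    set a := (FF h1 h2 m1 m2 k).1 with hadef
    set b := (FF h1 h2 m1 m2 k).2 with hbdef
    rw [FF_succ]
    by_cases hA : mvA h1 h2 m1 m2 k a b <;> by_cases hB : mvB h1 h2 m1 m2 k a b
    · simp only [hA, hB, if_true, ← hadef, ← hbdef]
      obtain ⟨ha1, -, hA3⟩ := id hA
      obtain ⟨hb1, -, hB3⟩ := id hB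
      refine ⟨by omega, by omega, ?_⟩
      rcases hA3 with hp1 | ⟨-, -, hs2, hs1⟩ <;> rcases hB3 with hp2 | ⟨-, -, hs1', hs2'⟩ <;> omega
    · simp only [hA, hB, if_true, if_false, ← hadef, ← hbdef]
      obtain ⟨ha1, hap, hA3⟩ := id hA
      refine ⟨by omega, hb, ?_⟩
      rcases hA3 with hp1 | ⟨hb1, hbp, hs2, hs1⟩
      · omega
      · exact absurd ⟨hb1, hbp, Or.inr ⟨ha1, hap, hs1, hs2⟩⟩ hB
    · simp only [hA, hB, if_true, if_false, ← hadef, ← hbdef]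
      obtain ⟨hb1, hbp, hB3⟩ := id hB
      refine ⟨ha, by omega, ?_⟩
      rcases hB3 with hp2 | ⟨ha1, hap, hs1, hs2⟩
      · omega
      · exact absurd ⟨ha1, hap, Or.inr ⟨hb1, hbp, hs2, hs1⟩⟩ hA
    · simp only [hA, hB, if_false, ← hadef, ← hbdef]
      exact ⟨ha, hb, heq⟩

/-- The target is absorbing. -/
lemma FF_absorb (i : ℕ) (hi : FF h1 h2 m1 m2 i = (m1, m2)) :
    FF h1 h2 m1 m2 (i+1) = (m1, m2) := by
  classical
  rw [FF_succ, hi]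
  have hA : ¬ mvA h1 h2 m1 m2 i (m1, m2).1 (m1, m2).2 := fun h => by
    obtain ⟨h, -⟩ := h; simp at h
  have hB : ¬ mvB h1 h2 m1 m2 i (m1, m2).1 (m1, m2).2 := fun h => by
    obtain ⟨h, -⟩ := h; simp at h
  simp [hA, hB]

/-- Progress: if the target is not reached, the sum grows within two steps. -/
lemma FF_progress
    (E1 : ∀ a, a < m1 → h1 (a+1) = h1 a ∨ (h1 (a+1) = h1 a + 1 ∧ h1 a % 2 = a % 2 ∧ h1 a < m))
    (E2 : ∀ b, b < m2 → h2 (b+1) = h2 b ∨ (h2 (b+1) = h2 b + 1 ∧ h2 b % 2 = b % 2 ∧ h2 b < m))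
    (h10 : h1 0 = 0) (h20 : h2 0 = 0) (h1m : h1 m1 = m) (h2m : h2 m2 = m)
    (i : ℕ) (hne : FF h1 h2 m1 m2 i ≠ (m1, m2)) :
    (FF h1 h2 m1 m2 i).1 + (FF h1 h2 m1 m2 i).2 + 1 ≤
      (FF h1 h2 m1 m2 (i+2)).1 + (FF h1 h2 m1 m2 (i+2)).2 := by
  classical
  obtain ⟨ha, hb, heq⟩ := FF_inv h1 h2 m1 m2 E1 E2 h10 h20 i
  set a := (FF h1 h2 m1 m2 i).1 with hadef
  set b := (FF h1 h2 m1 m2 i).2 with hbdef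
  have hmono1 : (FF h1 h2 m1 m2 (i+1)).1 ≤ (FF h1 h2 m1 m2 (i+2)).1 :=
    FF_fst_mono h1 h2 m1 m2 (i+1) (i+2) (by omega)
  have hmono2 : (FF h1 h2 m1 m2 (i+1)).2 ≤ (FF h1 h2 m1 m2 (i+2)).2 :=
    FF_snd_mono h1 h2 m1 m2 (i+1) (i+2) (by omega)
  by_cases hA : mvA h1 h2 m1 m2 i a b
  · have : (FF h1 h2 m1 m2 (i+1)).1 = a + 1 ∧ (FF h1 h2 m1 m2 (i+1)).2 = b ∨
        (FF h1 h2 m1 m2 (i+1)).1 = a + 1 ∧ (FF h1 h2 m1 m2 (i+1)).2 = b + 1 := by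
      rw [FF_succ]
      by_cases hB : mvB h1 h2 m1 m2 i a b
      · right; simp [← hadef, ← hbdef, hA, hB]
      · left; simp [← hadef, ← hbdef, hA, hB]
    omega
  by_cases hB : mvB h1 h2 m1 m2 i a b
  · have : (FF h1 h2 m1 m2 (i+1)).1 = a ∧ (FF h1 h2 m1 m2 (i+1)).2 = b + 1 := by
      rw [FF_succ]; simp [← hadef, ← hbdef, hA, hB]
    omega
  -- no move at step i: the state is unchanged
  have hstay : FF h1 h2 m1 m2 (i+1) = (a, b) := by
    rw [FF_succ]; simp [← hadef, ← hbdef, hA, hB]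
  -- a move happens at step i+1
  have hmove : mvA h1 h2 m1 m2 (i+1) a b ∨ mvB h1 h2 m1 m2 (i+1) a b := by
    rcases Nat.lt_or_ge a m1 with ham | ham
    · rcases E1 a ham with hp1 | ⟨hs1, hpar1, hlt1⟩
      · -- h1 pauses at a; a can move whenever parity matches
        have hnp : ¬ a % 2 = i % 2 := fun hp => hA ⟨ham, hp, Or.inl hp1⟩
        exact Or.inl ⟨ham, by omega, Or.inl hp1⟩
      · -- h1 steps at a; need the partner
        have hbm : b < m2 := by
          rcases Nat.lt_or_ge b m2 with h | h
          · exact h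
          · exfalso
            have : b = m2 := by omega
            rw [this, h2m] at heq
            omega
        rcases E2 b hbm with hp2 | ⟨hs2, hpar2, hlt2⟩
        · have hnp : ¬ b % 2 = i % 2 := fun hp => hB ⟨hbm, hp, Or.inl hp2⟩
          exact Or.inr ⟨hbm, by omega, Or.inl hp2⟩
        · -- both step; parities agree
          have hab : a % 2 = b % 2 := by omega
          have hnp : ¬ a % 2 = i % 2 := fun hp =>
            hA ⟨ham, hp, Or.inr ⟨hbm, by omega, hs2, hs1⟩⟩
          refine Or.inl ⟨ham, by omega, Or.inr ⟨hbm, by omega, hs2, hs1⟩⟩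
    · -- a = m1: b marches alone in the tail
      have ham1 : a = m1 := by omega
      have hbm : b < m2 := by
        rcases Nat.lt_or_ge b m2 with h | h
        · exact h
        · exfalso
          exact hne (by rw [hadef, hbdef] at *; exact Prod.ext ham1 (by omega))
      rcases E2 b hbm with hp2 | ⟨hs2, hpar2, hlt2⟩
      · have hnp : ¬ b % 2 = i % 2 := fun hp => hB ⟨hbm, hp, Or.inl hp2⟩
        exact Or.inr ⟨hbm, by omega, Or.inl hp2⟩
      · exfalso
        rw [ham1, h1m] at heq
        omega
  -- so the sum grows at step i+1
  have h2step : a + b + 1 ≤ (FF h1 h2 m1 m2 (i+2)).1 + (FF h1 h2 m1 m2 (i+2)).2 := by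
    have heq2 : (FF h1 h2 m1 m2 (i+1)).1 = a ∧ (FF h1 h2 m1 m2 (i+1)).2 = b := by
      rw [hstay]; exact ⟨rfl, rfl⟩
    rcases hmove with hm | hm
    · rcases FF_fst_succ h1 h2 m1 m2 (i+1) with h | ⟨h, -⟩
      · exfalso
        -- mvA holds at i+1, so the first coordinate must move
        have : (FF h1 h2 m1 m2 (i+1+1)).1 = (FF h1 h2 m1 m2 (i+1)).1 + 1 := by
          rw [FF_succ]
          simp [heq2.1, heq2.2, hm]
        omega
      · have h2m' : (FF h1 h2 m1 m2 (i+1)).2 ≤ (FF h1 h2 m1 m2 (i+2)).2 :=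
          FF_snd_mono h1 h2 m1 m2 (i+1) (i+2) (by omega)
        have : (i+1)+1 = i+2 := by omega
        rw [this] at h
        omega
    · have : (FF h1 h2 m1 m2 (i+1+1)).2 = (FF h1 h2 m1 m2 (i+1)).2 + 1 := by
        rw [FF_succ]
        simp [heq2.1, heq2.2, hm]
      have h1m' : (FF h1 h2 m1 m2 (i+1)).1 ≤ (FF h1 h2 m1 m2 (i+2)).1 :=
        FF_fst_mono h1 h2 m1 m2 (i+1) (i+2) (by omega)
      have h21 : (i+1)+1 = i+2 := by omega
      rw [h21] at this
      omega
  exact h2step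


lemma FF_reach
    (E1 : ∀ a, a < m1 → h1 (a+1) = h1 a ∨ (h1 (a+1) = h1 a + 1 ∧ h1 a % 2 = a % 2 ∧ h1 a < m))
    (E2 : ∀ b, b < m2 → h2 (b+1) = h2 b ∨ (h2 (b+1) = h2 b + 1 ∧ h2 b % 2 = b % 2 ∧ h2 b < m))
    (h10 : h1 0 = 0) (h20 : h2 0 = 0) (h1m : h1 m1 = m) (h2m : h2 m2 = m) :
    FF h1 h2 m1 m2 (2*(m1+m2)) = (m1, m2) := by
  have key : ∀ k, FF h1 h2 m1 m2 (2*k) = (m1, m2) ∨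
      k ≤ (FF h1 h2 m1 m2 (2*k)).1 + (FF h1 h2 m1 m2 (2*k)).2 := by
    intro k
    induction k with
    | zero => right; omega
    | succ n ih =>
      have h2n : 2*(n+1) = 2*n + 1 + 1 := by omega
      rcases ih with ht | hs
      · left
        rw [h2n]
        exact FF_absorb h1 h2 m1 m2 _ (FF_absorb h1 h2 m1 m2 _ ht)
      · by_cases ht : FF h1 h2 m1 m2 (2*n) = (m1, m2)
        · left
          rw [h2n]
          exact FF_absorb h1 h2 m1 m2 _ (FF_absorb h1 h2 m1 m2 _ ht)
        · right
          have := FF_progress h1 h2 m1 m2 E1 E2 h10 h20 h1m h2m (2*n) ht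
          have h2n' : 2*n+2 = 2*(n+1) := by omega
          rw [h2n'] at this
          omega
  rcases key (m1 + m2) with h | h
  · exact h
  · obtain ⟨ha, hb, -⟩ := FF_inv h1 h2 m1 m2 E1 E2 h10 h20 (2*(m1+m2))
    have h1' : (FF h1 h2 m1 m2 (2*(m1+m2))).1 = m1 := by omega
    have h2' : (FF h1 h2 m1 m2 (2*(m1+m2))).2 = m2 := by omega
    exact Prod.ext h1' h2'

end Stmt8Aux

/-- Any two subdivisions `f ∘ h₁`, `f ∘ h₂` of a standard path `f : J_m → G` admit a
common subdivision: there are shrinking maps `q₁ : J_M → J_{m₁}` and `q₂ : J_M → J_{m₂}`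
with `h₁ ∘ q₁ = h₂ ∘ q₂`, hence `(f ∘ h₁) ∘ q₁ = (f ∘ h₂) ∘ q₂`. -/


theorem stmt8 {V : Type*} (A : V → V → Prop) {m m1 m2 : ℕ}
    (f : ℕ → V) (hf : IsDigraphMap (lineAdj m Jdir) A f)
    (h1 h2 : ℕ → ℕ)
    (hh1 : IsShrinking m1 m Jdir Jdir h1) (hh2 : IsShrinking m2 m Jdir Jdir h2) :
    ∃ M, ∃ q1 q2 : ℕ → ℕ,
      IsShrinking M m1 Jdir Jdir q1 ∧ IsShrinking M m2 Jdir Jdir q2 ∧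
      (∀ i ≤ M, h1 (q1 i) = h2 (q2 i)) ∧
      (∀ i ≤ M, f (h1 (q1 i)) = f (h2 (q2 i))) := by
  classical
  open Stmt8Aux in
  have E1 := shrink_step hh1
  have E2 := shrink_step hh2
  have h10 : h1 0 = 0 := hh1.2.1
  have h20 : h2 0 = 0 := hh2.2.1
  have h1m : h1 m1 = m := hh1.2.2.1
  have h2m : h2 m2 = m := hh2.2.2.1
  set M := 2*(m1+m2) with hM
  set q1 : ℕ → ℕ := fun i => (Stmt8Aux.FF h1 h2 m1 m2 i).1 with hq1
  set q2 : ℕ → ℕ := fun i => (Stmt8Aux.FF h1 h2 m1 m2 i).2 with hq2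
  have hreach := Stmt8Aux.FF_reach h1 h2 m1 m2 E1 E2 h10 h20 h1m h2m
  have hinv := Stmt8Aux.FF_inv h1 h2 m1 m2 E1 E2 h10 h20
  refine ⟨M, q1, q2, ?_, ?_, ?_, ?_⟩
  · -- q1 is shrinking
    refine ⟨?_, by simp [hq1, Stmt8Aux.FF], ?_, ?_⟩
    · intro v w hvw
      rcases hvw with ⟨hw, hv, hd⟩ | ⟨hv, hw, hd⟩
      · subst hw
        rcases Stmt8Aux.FF_fst_succ h1 h2 m1 m2 v with h | ⟨h, hmv⟩
        · right; exact h.symm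
        · left
          obtain ⟨ham, hpar, -⟩ := hmv
          have hv2 : v % 2 = 0 := Stmt8Aux.Jdir_true.mp hd
          exact Or.inl ⟨h, ham, Stmt8Aux.Jdir_true.mpr (by simp only [hq1, hq2]; omega)⟩
      · subst hv
        rcases Stmt8Aux.FF_fst_succ h1 h2 m1 m2 w with h | ⟨h, hmv⟩
        · right; exact h
        · left
          obtain ⟨ham, hpar, -⟩ := hmv
          have hw2 : w % 2 = 1 := Stmt8Aux.Jdir_false.mp hd
          exact Or.inr ⟨h, ham, Stmt8Aux.Jdir_false.mpr (by simp only [hq1, hq2]; omega)⟩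
    · show (Stmt8Aux.FF h1 h2 m1 m2 M).1 = m1
      rw [hM, hreach]
    · intro i j hij _
      exact Stmt8Aux.FF_fst_mono h1 h2 m1 m2 i j hij
  · refine ⟨?_, by simp [hq2, Stmt8Aux.FF], ?_, ?_⟩
    · intro v w hvw
      rcases hvw with ⟨hw, hv, hd⟩ | ⟨hv, hw, hd⟩
      · subst hw
        rcases Stmt8Aux.FF_snd_succ h1 h2 m1 m2 v with h | ⟨h, hmv⟩
        · right; exact h.symm
        · left
          obtain ⟨hbm, hpar, -⟩ := hmv
          have hv2 : v % 2 = 0 := Stmt8Aux.Jdir_true.mp hd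
          exact Or.inl ⟨h, hbm, Stmt8Aux.Jdir_true.mpr (by simp only [hq1, hq2]; omega)⟩
      · subst hv
        rcases Stmt8Aux.FF_snd_succ h1 h2 m1 m2 w with h | ⟨h, hmv⟩
        · right; exact h
        · left
          obtain ⟨hbm, hpar, -⟩ := hmv
          have hw2 : w % 2 = 1 := Stmt8Aux.Jdir_false.mp hd
          exact Or.inr ⟨h, hbm, Stmt8Aux.Jdir_false.mpr (by simp only [hq1, hq2]; omega)⟩
    · show (Stmt8Aux.FF h1 h2 m1 m2 M).2 = m2
      rw [hM, hreach]
    · intro i j hij _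
      exact Stmt8Aux.FF_snd_mono h1 h2 m1 m2 i j hij
  · intro i _
    exact (hinv i).2.2
  · intro i _
    exact congrArg f (hinv i).2.2
end

section
/- If h₁ : J_{m₁} → J_m and h₂ : J_{m₂} → J_m are shrinking maps between standard line digraphs, then for every vertex i with 0 ≤ i < m, the difference |#h₁⁻¹(i) − #h₂⁻¹(i)| of fiber cardinalities is even. -/
lemma step_lemma {N m : ℕ} {h : ℕ → ℕ} (hs : IsShrinking N m Jdir Jdir h)
    {k : ℕ} (hk : k < N) :
    h (k+1) = h k ∨ (h (k+1) = h k + 1 ∧ (Even k ↔ Even (h k))) := by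
  obtain ⟨hmap, h0, hN, hmono⟩ := hs
  have mono' : h k ≤ h (k+1) := hmono k (k+1) (by omega) (by omega)
  by_cases he : Even k
  · have adj : lineAdj N Jdir k (k+1) := Or.inl ⟨rfl, hk, by simp [Jdir, he]⟩
    rcases hmap k (k+1) adj with hB | hEq
    · rcases hB with ⟨h1, _, h2⟩ | ⟨h1, _, _⟩
      · right
        refine ⟨h1, ?_⟩
        simp [Jdir, decide_eq_true_eq] at h2
        tauto
      · omega
    · left; omega
  · have adj : lineAdj N Jdir (k+1) k := Or.inr ⟨rfl, hk, by simp [Jdir, he]⟩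
    rcases hmap (k+1) k adj with hB | hEq
    · rcases hB with ⟨h1, _, _⟩ | ⟨h1, _, h2⟩
      · omega
      · right
        refine ⟨h1, ?_⟩
        simp [Jdir] at h2
        exact iff_of_false he (Nat.not_even_iff_odd.mpr h2)
    · left; omega

lemma parity_find {N m : ℕ} {h : ℕ → ℕ} (hs : IsShrinking N m Jdir Jdir h)
    {i : ℕ} (him : i ≤ m) (ex : ∃ j, i ≤ h j) :
    (Even (Nat.find ex) ↔ Even i) ∧ Nat.find ex ≤ N := by
  have hN : h N = m := hs.2.2.1
  have h0 : h 0 = 0 := hs.2.1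
  have hle : Nat.find ex ≤ N := Nat.find_le (by omega)
  refine ⟨?_, hle⟩
  rcases Nat.eq_zero_or_pos i with rfl | hi
  · have hz : Nat.find ex = 0 := Nat.le_zero.mp (Nat.find_le (by omega))
    rw [hz]
  · have hcpos : 0 < Nat.find ex := by
      rcases Nat.eq_zero_or_pos (Nat.find ex) with h' | h'
      · have hx := Nat.find_spec ex
        rw [h', h0] at hx; omega
      · exact h'
    have hprev : ¬ i ≤ h (Nat.find ex - 1) := Nat.find_min ex (by omega)
    have hspec : i ≤ h (Nat.find ex) := Nat.find_spec ex
    have hstep := step_lemma hs (show Nat.find ex - 1 < N by omega)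
    rw [show Nat.find ex - 1 + 1 = Nat.find ex by omega] at hstep
    rcases hstep with h' | ⟨h1, h2⟩
    · omega
    · have hhi : h (Nat.find ex - 1) = i - 1 := by omega
      rw [hhi] at h2
      simp only [Nat.even_iff] at h2 ⊢
      omega

lemma fiber_odd {N m : ℕ} {h : ℕ → ℕ} (hs : IsShrinking N m Jdir Jdir h) :
    ∀ i < m, Odd ((Finset.range (N+1)).filter (fun k => h k = i)).card := by
  intro i him
  have hN : h N = m := hs.2.2.1
  have hmono := hs.2.2.2
  have ex1 : ∃ j, i ≤ h j := ⟨N, by omega⟩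
  have ex2 : ∃ j, i + 1 ≤ h j := ⟨N, by omega⟩
  obtain ⟨hpa, haN⟩ := parity_find hs (by omega) ex1
  obtain ⟨hpb, hbN⟩ := parity_find hs (by omega) ex2
  have hspec1 : i ≤ h (Nat.find ex1) := Nat.find_spec ex1
  have hspec2 : i + 1 ≤ h (Nat.find ex2) := Nat.find_spec ex2
  have hab : Nat.find ex1 ≤ Nat.find ex2 := Nat.find_min' ex1 (by omega)
  have hset : (Finset.range (N+1)).filter (fun k => h k = i)
      = Finset.Ico (Nat.find ex1) (Nat.find ex2) := by
    ext k
    simp only [Finset.mem_filter, Finset.mem_range, Finset.mem_Ico]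
    constructor
    · rintro ⟨hk, hki⟩
      refine ⟨Nat.find_min' ex1 (by omega), ?_⟩
      by_contra hkb
      push_neg at hkb
      have := hmono (Nat.find ex2) k hkb (by omega)
      omega
    · rintro ⟨hak, hkb⟩
      have hkN : k ≤ N := by omega
      have h1 : h (Nat.find ex1) ≤ h k := hmono _ k hak hkN
      have h2 : ¬ i + 1 ≤ h k := Nat.find_min ex2 hkb
      constructor <;> omega
  rw [hset, Nat.card_Ico]
  rw [← Nat.not_even_iff_odd, Nat.even_sub hab]
  simp only [Nat.even_iff] at hpa hpb ⊢
  omega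

/-- For shrinking maps `h₁ : J_{m₁} → J_m` and `h₂ : J_{m₂} → J_m` between standard line
digraphs, the fiber cardinalities over any vertex `i < m` differ by an even number. -/
theorem stmt9 {m m1 m2 : ℕ} (h1 h2 : ℕ → ℕ)
    (hh1 : IsShrinking m1 m Jdir Jdir h1) (hh2 : IsShrinking m2 m Jdir Jdir h2) :
    ∀ i < m,
      Even ((((Finset.range (m1 + 1)).filter (fun k => h1 k = i)).card : ℤ) -
        (((Finset.range (m2 + 1)).filter (fun k => h2 k = i)).card : ℤ)) := by
  intro i him
  have o1 := fiber_odd hh1 i him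
  have o2 := fiber_odd hh2 i him
  exact Odd.sub_odd (by exact_mod_cast o1) (by exact_mod_cast o2)
end

section
/- One-step F-homotopy implies C-homotopy for paths: if f : J_m → G and g : J_n → G are paths such that there exist subdivisions f̄ of f and ḡ of g (of equal length) with f̄ directly one-step homotopic to ḡ (i.e., there is a digraph map F : J_N □ I_1 → G restricting to f̄ on J_N □ {0} and to ḡ on J_N □ {1}, fixing endpoints appropriately), then f ≃^C g. -/
/-- Adjacency of the inverse cylinder `C_h⁻` of a map between line digraphs. -/
def cylAdjLineInv (M m : ℕ) (dM dm : ℕ → Bool) (h : ℕ → ℕ) :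
    ℕ ⊕ ℕ → ℕ ⊕ ℕ → Prop
  | Sum.inl i, Sum.inl j => lineAdj M dM i j
  | Sum.inr i, Sum.inr j => lineAdj m dm i j
  | Sum.inr j, Sum.inl i => i ≤ M ∧ h i = j
  | Sum.inl _, Sum.inr _ => False

/-- A based path in `(G, x)` from a line digraph: length, arrow directions, a digraph
map on `{0,…,len}`, starting at `x`. -/
structure PathN (V : Type*) (A : V → V → Prop) (x : V) where
  len : ℕ
  dir : ℕ → Bool
  toFun : ℕ → V
  ismap : IsDigraphMap (lineAdj len dir) A toFun
  base : toFun 0 = x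

/-- One-step direct C-homotopy `φ ≃¹ ψ` via a digraph map on the cylinder. -/
def OneStepC {V : Type*} {A : V → V → Prop} {x : V} (φ ψ : PathN V A x) : Prop :=
  ∃ h : ℕ → ℕ, IsShrinking φ.len ψ.len φ.dir ψ.dir h ∧
    ∃ F : ℕ ⊕ ℕ → V, IsDigraphMap (cylAdjLine φ.len ψ.len φ.dir ψ.dir h) A F ∧
      F ∘ Sum.inl = φ.toFun ∧ F ∘ Sum.inr = ψ.toFun

/-- One-step inverse C-homotopy `φ ≃⁻¹ ψ` via a digraph map on the inverse cylinder. -/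
def OneStepCInv {V : Type*} {A : V → V → Prop} {x : V} (φ ψ : PathN V A x) : Prop :=
  ∃ h : ℕ → ℕ, IsShrinking φ.len ψ.len φ.dir ψ.dir h ∧
    ∃ F : ℕ ⊕ ℕ → V, IsDigraphMap (cylAdjLineInv φ.len ψ.len φ.dir ψ.dir h) A F ∧
      F ∘ Sum.inl = φ.toFun ∧ F ∘ Sum.inr = ψ.toFun

/-- C-homotopy: the equivalence relation generated by one-step (direct and inverse)
C-homotopies. -/
def CHomotopic {V : Type*} {A : V → V → Prop} {x : V} :
    PathN V A x → PathN V A x → Prop :=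
  Relation.EqvGen (fun φ ψ => OneStepC φ ψ ∨ OneStepCInv φ ψ)

lemma digraphMap_comp {V W U : Type*} {A : V → V → Prop} {B : W → W → Prop}
    {C : U → U → Prop} {h : V → W} {f : W → U}
    (hh : IsDigraphMap A B h) (hf : IsDigraphMap B C f) :
    IsDigraphMap A C (f ∘ h) := by
  intro v w hvw
  rcases hh v w hvw with h1 | h1
  · exact hf _ _ h1
  · exact Or.inr (congrArg f h1)

/-- A subdivision is one-step directly C-homotopic to the original path. -/
lemma subdiv_oneStep {V : Type*} {A : V → V → Prop} {x : V} {N M : ℕ}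
    (f : ℕ → V) (hf : IsDigraphMap (lineAdj M Jdir) A f) (hf0 : f 0 = x)
    (h : ℕ → ℕ) (hs : IsShrinking N M Jdir Jdir h) :
    OneStepC (⟨N, Jdir, f ∘ h, digraphMap_comp hs.1 hf,
      by simp [Function.comp, hs.2.1, hf0]⟩ : PathN V A x)
      ⟨M, Jdir, f, hf, hf0⟩ := by
  refine ⟨h, hs, Sum.elim (f ∘ h) f, ?_, rfl, rfl⟩
  intro v w hvw
  match v, w with
  | Sum.inl i, Sum.inl j => exact digraphMap_comp hs.1 hf i j hvw
  | Sum.inr i, Sum.inr j => exact hf i j hvw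
  | Sum.inl i, Sum.inr j => exact Or.inr (by simp [hvw.2])
  | Sum.inr i, Sum.inl j => exact hvw.elim

/-- One-step F-homotopy implies C-homotopy: if standard paths `f : J_m → G`,
`g : J_n → G` admit subdivisions of a common length `N` which are directly one-step
homotopic via a digraph map `F : J_N □ I_1 → G` fixing the start point, then
`f ≃^C g`. -/
theorem stmt15 {V : Type*} (A : V → V → Prop) (x : V) {m n : ℕ}
    (f g : ℕ → V)
    (hf : IsDigraphMap (lineAdj m Jdir) A f) (hf0 : f 0 = x)
    (hg : IsDigraphMap (lineAdj n Jdir) A g) (hg0 : g 0 = x)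
    (hyp : ∃ (N : ℕ) (hfs hgs : ℕ → ℕ),
      IsShrinking N m Jdir Jdir hfs ∧ IsShrinking N n Jdir Jdir hgs ∧
      ∃ F : ℕ × ℕ → V,
        IsDigraphMap (boxAdj (lineAdj N Jdir) (lineAdj 1 (fun _ => true))) A F ∧
        (∀ i, F (i, 0) = f (hfs i)) ∧ (∀ i, F (i, 1) = g (hgs i)) ∧
        (∀ t, F (0, t) = x)) :
    CHomotopic (⟨m, Jdir, f, hf, hf0⟩ : PathN V A x) ⟨n, Jdir, g, hg, hg0⟩ := by
  obtain ⟨N, hfs, hgs, hsf, hsg, F, hF, hF0, hF1, hFt⟩ := hyp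
  set fbar : PathN V A x := ⟨N, Jdir, f ∘ hfs, digraphMap_comp hsf.1 hf,
    by simp [Function.comp, hsf.2.1, hf0]⟩
  set gbar : PathN V A x := ⟨N, Jdir, g ∘ hgs, digraphMap_comp hsg.1 hg,
    by simp [Function.comp, hsg.2.1, hg0]⟩
  have step1 : CHomotopic (⟨m, Jdir, f, hf, hf0⟩ : PathN V A x) fbar :=
    Relation.EqvGen.symm _ _
      (Relation.EqvGen.rel _ _ (Or.inl (subdiv_oneStep f hf hf0 hfs hsf)))
  have step3 : CHomotopic gbar (⟨n, Jdir, g, hg, hg0⟩ : PathN V A x) :=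
    Relation.EqvGen.rel _ _ (Or.inl (subdiv_oneStep g hg hg0 hgs hsg))
  have step2 : OneStepC fbar gbar := by
    refine ⟨id, ⟨?_, rfl, rfl, fun i j hij _ => hij⟩,
      Sum.elim (fun i => F (i, 0)) (fun i => F (i, 1)), ?_, ?_, ?_⟩
    · intro v w hvw
      exact Or.inl hvw
    · intro v w hvw
      match v, w with
      | Sum.inl i, Sum.inl j =>
          exact hF (i, 0) (j, 0) (Or.inr ⟨hvw, rfl⟩)
      | Sum.inr i, Sum.inr j =>
          exact hF (i, 1) (j, 1) (Or.inr ⟨hvw, rfl⟩)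
      | Sum.inl i, Sum.inr j =>
          have hij : i = j := hvw.2
          subst hij
          exact hF (i, 0) (i, 1) (Or.inl ⟨rfl, Or.inl ⟨rfl, Nat.one_pos, rfl⟩⟩)
      | Sum.inr i, Sum.inl j => exact hvw.elim
    · funext i; exact hF0 i
    · funext i; exact hF1 i
  exact Relation.EqvGen.trans _ _ _ step1
    (Relation.EqvGen.trans _ _ _ (Relation.EqvGen.rel _ _ (Or.inl step2)) step3)
end

section
/- Every digraph map into the reduced path digraph lifts from loops: for a based digraph (G,∗) and any digraph map l : 0 → P̄G (a choice of vertex ⟨γ⟩ with γ : J_m → G a path from ∗), there is a digraph map F : J_m → P̄G with F(m) = ⟨γ⟩ and F(0) = ⟨l_∗⟩, where F(i) = ⟨γ|_{J_i}⟩; hence π̄₀(P̄G) is trivial. -/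
/-- `φ` is a subdivision of `ψ`: `φ = ψ ∘ h` (on its domain) for a shrinking map `h`. -/
def IsSubdivOf {V : Type*} {A : V → V → Prop} {x : V} (φ ψ : PathN V A x) : Prop :=
  ∃ h : ℕ → ℕ, IsShrinking φ.len ψ.len φ.dir ψ.dir h ∧
    ∀ i ≤ φ.len, φ.toFun i = ψ.toFun (h i)

/-- A minimal path: no two consecutive values coincide. -/
def MinimalPath {V : Type*} {A : V → V → Prop} {x : V} (φ : PathN V A x) : Prop :=
  ∀ i < φ.len, φ.toFun i ≠ φ.toFun (i + 1)

/-- Subdivision equivalence: two paths have the same minimal path, i.e. are both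
subdivisions of a common minimal path. -/
def SubdivRel (V : Type*) (A : V → V → Prop) (x : V) (φ ψ : PathN V A x) : Prop :=
  ∃ ρ : PathN V A x, MinimalPath ρ ∧ IsSubdivOf φ ρ ∧ IsSubdivOf ψ ρ

/-- Vertices of the reduced path digraph `P̄G`: subdivision classes of based paths. -/
def PbarV (V : Type*) (A : V → V → Prop) (x : V) := Quot (SubdivRel V A x)

/-- Adjacency of the reduced path digraph: `⟨f⟩ → ⟨g⟩` iff some representatives of the
two classes, defined on the same line digraph, satisfy `f₁(v) → g₁(v)` or
`f₁(v) = g₁(v)` for every vertex `v`. -/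
def PbarAdj (V : Type*) (A : V → V → Prop) (x : V) :
    PbarV V A x → PbarV V A x → Prop :=
  fun a b => ∃ φ ψ : PathN V A x,
    Quot.mk (SubdivRel V A x) φ = a ∧ Quot.mk (SubdivRel V A x) ψ = b ∧
    φ.len = ψ.len ∧ (∀ i < φ.len, φ.dir i = ψ.dir i) ∧
    ∀ i ≤ φ.len, A (φ.toFun i) (ψ.toFun i) ∨ φ.toFun i = ψ.toFun i

/-- The constant path at the base-point (the class `⟨l_∗⟩`). -/
def constPathN (V : Type*) (A : V → V → Prop) (x : V) : PathN V A x :=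
  ⟨0, fun _ => true, fun _ => x,
    fun v w hvw => by
      rcases hvw with ⟨_, h, _⟩ | ⟨_, h, _⟩ <;> exact absurd h (Nat.not_lt_zero _),
    rfl⟩

section Helpers

variable {V : Type*}

lemma lineAdj_mono {n n' : ℕ} (h : n ≤ n') {d : ℕ → Bool} {i j : ℕ}
    (hij : lineAdj n d i j) : lineAdj n' d i j := by
  rcases hij with ⟨h1, h2, h3⟩ | ⟨h1, h2, h3⟩
  · exact Or.inl ⟨h1, lt_of_lt_of_le h2 h, h3⟩
  · exact Or.inr ⟨h1, lt_of_lt_of_le h2 h, h3⟩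

lemma lineAdj_zero {d : ℕ → Bool} {i j : ℕ} (h : lineAdj 0 d i j) : False := by
  rcases h with ⟨_, h, _⟩ | ⟨_, h, _⟩ <;> exact Nat.not_lt_zero _ h

lemma isDigraphMap_comp {V W X : Type*} {A : V → V → Prop} {B : W → W → Prop}
    {C : X → X → Prop} {f : V → W} {g : W → X}
    (hf : IsDigraphMap A B f) (hg : IsDigraphMap B C g) :
    IsDigraphMap A C (fun v => g (f v)) := by
  intro v w h
  rcases hf v w h with h' | h'
  · exact hg _ _ h'
  · exact Or.inr (congrArg g h')

lemma shrink_min (n : ℕ) (d : ℕ → Bool) :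
    IsShrinking (n + 1) n d d (fun k => min k n) := by
  refine ⟨?_, by simp, by simp, fun i j hij _ => by dsimp only; omega⟩
  intro v w hvw
  dsimp only
  rcases hvw with ⟨h1, h2, h3⟩ | ⟨h1, h2, h3⟩
  · by_cases hv : v < n
    · exact Or.inl (Or.inl ⟨by omega, by omega, by rwa [show min v n = v by omega]⟩)
    · exact Or.inr (by omega)
  · by_cases hw : w < n
    · exact Or.inl (Or.inr ⟨by omega, by omega, by rwa [show min w n = w by omega]⟩)
    · exact Or.inr (by omega)

lemma shrink_comp {N m M : ℕ} {dN dm dM : ℕ → Bool} {h₁ h₂ : ℕ → ℕ}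
    (H1 : IsShrinking N m dN dm h₁) (H2 : IsShrinking M N dM dN h₂) :
    IsShrinking M m dM dm (fun i => h₁ (h₂ i)) := by
  obtain ⟨map1, z1, e1, mono1⟩ := H1
  obtain ⟨map2, z2, e2, mono2⟩ := H2
  refine ⟨isDigraphMap_comp map2 map1, by dsimp only; rw [z2, z1],
    by dsimp only; rw [e2, e1], ?_⟩
  intro i j hij hjM
  exact mono1 _ _ (mono2 i j hij hjM) (by rw [← e2]; exact mono2 j M hjM le_rfl)

lemma subdivOf_trans {A : V → V → Prop} {x : V} {φ ψ ρ : PathN V A x}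
    (h1 : IsSubdivOf φ ψ) (h2 : IsSubdivOf ψ ρ) : IsSubdivOf φ ρ := by
  obtain ⟨h₂, S2, E2⟩ := h1
  obtain ⟨h₁, S1, E1⟩ := h2
  refine ⟨fun i => h₁ (h₂ i), shrink_comp S1 S2, ?_⟩
  intro i hi
  rw [E2 i hi, E1 _ (by rw [← S2.2.2.1]; exact S2.2.2.2 i φ.len hi le_rfl)]

lemma exists_minimal_aux (A : V → V → Prop) (d : ℕ → Bool) (f : ℕ → V) :
    ∀ n, IsDigraphMap (lineAdj n d) A f →
    ∃ (m : ℕ) (e : ℕ → Bool) (g : ℕ → V) (h : ℕ → ℕ),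
      IsDigraphMap (lineAdj m e) A g ∧ g 0 = f 0 ∧
      (∀ i < m, g i ≠ g (i + 1)) ∧
      IsShrinking n m d e h ∧ (∀ i ≤ n, f i = g (h i)) := by
  intro n
  induction n with
  | zero =>
    intro _
    refine ⟨0, d, f, fun _ => 0, fun v w h => (lineAdj_zero h).elim, rfl,
      fun i hi => absurd hi (Nat.not_lt_zero i),
      ⟨fun v w h => (lineAdj_zero h).elim, rfl, rfl, fun _ _ _ _ => le_rfl⟩, ?_⟩
    intro i hi
    interval_cases i
    rfl
  | succ n ih =>
    intro hf
    obtain ⟨m, e, g, h, gmap, g0, gmin, ⟨hmap, h0, hN, hmono⟩, heq⟩ :=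
      ih (fun v w hvw => hf v w (lineAdj_mono (Nat.le_succ n) hvw))
    have hile : ∀ i ≤ n, h i ≤ m := fun i hi => by
      rw [← hN]; exact hmono i n hi le_rfl
    by_cases hc : f (n + 1) = f n
    · refine ⟨m, e, g, fun i => if i = n + 1 then m else h i, gmap, g0, gmin,
        ⟨?_, by simp [h0], by simp, ?_⟩, ?_⟩
      · intro v w hvw
        dsimp only
        rcases hvw with ⟨h1, h2, h3⟩ | ⟨h1, h2, h3⟩
        · by_cases hv : v < n
          · rw [if_neg (by omega), if_neg (by omega)]
            exact hmap v w (Or.inl ⟨h1, hv, h3⟩)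
          · have : v = n := by omega
            subst this
            rw [if_neg (by omega), if_pos (by omega), hN]
            exact Or.inr rfl
        · by_cases hw : w < n
          · rw [if_neg (by omega), if_neg (by omega)]
            exact hmap v w (Or.inr ⟨h1, hw, h3⟩)
          · have : w = n := by omega
            subst this
            rw [if_pos (by omega), if_neg (by omega), hN]
            exact Or.inr rfl
      · intro i j hij hj
        dsimp only
        by_cases hjj : j = n + 1
        · subst hjj
          rw [if_pos rfl]
          by_cases hii : i = n + 1
          · simp [hii]
          · rw [if_neg hii]; exact hile i (by omega)
        · rw [if_neg hjj, if_neg (by omega)]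
          exact hmono i j hij (by omega)
      · intro i hi
        dsimp only
        by_cases hii : i = n + 1
        · subst hii
          rw [if_pos rfl, ← hN, ← heq n le_rfl, hc]
        · rw [if_neg hii]
          exact heq i (by omega)
    · refine ⟨m + 1, fun k => if k = m then d n else e k,
        fun k => if k = m + 1 then f (n + 1) else g k,
        fun i => if i = n + 1 then m + 1 else h i, ?_,
        by dsimp only; rw [if_neg (by omega)]; exact g0,
        ?_, ⟨?_, by simp [h0], by simp, ?_⟩, ?_⟩
      · -- new g is a digraph map
        intro v w hvw
        dsimp only
        rcases hvw with ⟨h1, h2, h3⟩ | ⟨h1, h2, h3⟩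
        · dsimp only at h3
          by_cases hv : v < m
          · rw [if_neg (by omega), if_neg (by omega)]
            rw [if_neg (by omega)] at h3
            exact gmap v w (Or.inl ⟨h1, hv, h3⟩)
          · have hvm : v = m := by omega
            rw [if_neg (by omega), if_pos (by omega)]
            rw [if_pos hvm] at h3
            have h4 : g v = f n := by rw [hvm, ← hN, ← heq n le_rfl]
            rw [h4]
            exact hf n (n + 1) (Or.inl ⟨rfl, by omega, h3⟩)
        · dsimp only at h3
          by_cases hw : w < m
          · rw [if_neg (by omega), if_neg (by omega)]
            rw [if_neg (by omega)] at h3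
            exact gmap v w (Or.inr ⟨h1, hw, h3⟩)
          · have hwm : w = m := by omega
            rw [if_pos (by omega), if_neg (by omega)]
            rw [if_pos hwm] at h3
            have h4 : g w = f n := by rw [hwm, ← hN, ← heq n le_rfl]
            rw [h4]
            exact hf (n + 1) n (Or.inr ⟨rfl, by omega, h3⟩)
      · -- minimality
        intro i hi
        dsimp only
        by_cases him : i < m
        · rw [if_neg (by omega), if_neg (by omega)]
          exact gmin i him
        · have him' : i = m := by omega
          rw [if_neg (by omega), if_pos (by omega)]
          have h4 : g i = f n := by rw [him', ← hN, ← heq n le_rfl]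
          rw [h4]
          exact fun hh => hc hh.symm
      · -- shrinking digraph map
        intro v w hvw
        dsimp only
        rcases hvw with ⟨h1, h2, h3⟩ | ⟨h1, h2, h3⟩
        · by_cases hv : v < n
          · rw [if_neg (by omega), if_neg (by omega)]
            rcases hmap v w (Or.inl ⟨h1, hv, h3⟩) with hh | hh
            · rcases hh with ⟨a1, a2, a3⟩ | ⟨a1, a2, a3⟩
              · exact Or.inl (Or.inl ⟨a1, by omega,
                  by dsimp only; rw [if_neg (by omega)]; exact a3⟩)
              · exact Or.inl (Or.inr ⟨a1, by omega,
                  by dsimp only; rw [if_neg (by omega)]; exact a3⟩)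
            · exact Or.inr hh
          · have hvn : v = n := by omega
            rw [if_neg (by omega), if_pos (by omega), hvn, hN]
            exact Or.inl (Or.inl ⟨rfl, by omega,
              by dsimp only; rw [if_pos rfl, ← hvn]; exact h3⟩)
        · by_cases hw : w < n
          · rw [if_neg (by omega), if_neg (by omega)]
            rcases hmap v w (Or.inr ⟨h1, hw, h3⟩) with hh | hh
            · rcases hh with ⟨a1, a2, a3⟩ | ⟨a1, a2, a3⟩
              · exact Or.inl (Or.inl ⟨a1, by omega,
                  by dsimp only; rw [if_neg (by omega)]; exact a3⟩)
              · exact Or.inl (Or.inr ⟨a1, by omega,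
                  by dsimp only; rw [if_neg (by omega)]; exact a3⟩)
            · exact Or.inr hh
          · have hwn : w = n := by omega
            rw [if_pos (by omega), if_neg (by omega), hwn, hN]
            exact Or.inl (Or.inr ⟨rfl, by omega,
              by dsimp only; rw [if_pos rfl, ← hwn]; exact h3⟩)
      · -- monotone
        intro i j hij hj
        dsimp only
        by_cases hjj : j = n + 1
        · subst hjj
          rw [if_pos rfl]
          by_cases hii : i = n + 1
          · simp [hii]
          · rw [if_neg hii]
            have := hile i (by omega)
            omega
        · rw [if_neg hjj, if_neg (by omega)]
          exact hmono i j hij (by omega)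
      · -- equations
        intro i hi
        dsimp only
        by_cases hii : i = n + 1
        · subst hii
          rw [if_pos rfl, if_pos rfl]
        · have hle := hile i (by omega)
          rw [if_neg hii, if_neg (by omega)]
          exact heq i (by omega)

lemma exists_minimal {A : V → V → Prop} {x : V} (φ : PathN V A x) :
    ∃ ρ : PathN V A x, MinimalPath ρ ∧ IsSubdivOf φ ρ := by
  obtain ⟨m, e, g, h, gmap, g0, gmin, hsh, heq⟩ :=
    exists_minimal_aux A φ.dir φ.toFun φ.len φ.ismap
  exact ⟨⟨m, e, g, gmap, by rw [g0, φ.base]⟩, gmin, h, hsh, heq⟩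

end Helpers

section Main

variable {V : Type*}

/-- Truncation of a path to length `min i γ.len`. -/
def truncP {A : V → V → Prop} {x : V} (γ : PathN V A x) (d : ℕ → Bool)
    (hd : γ.dir = d) (i : ℕ) : PathN V A x :=
  ⟨min i γ.len, d, γ.toFun,
    fun v w h => γ.ismap v w (by rw [hd]; exact lineAdj_mono (min_le_right i γ.len) h),
    γ.base⟩

lemma main_lift {A : V → V → Prop} {x : V} (γ : PathN V A x) (d : ℕ → Bool)
    (hd : γ.dir = d) :
    ∃ F : ℕ → PbarV V A x,
      IsDigraphMap (lineAdj γ.len d) (PbarAdj V A x) F ∧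
      F γ.len = Quot.mk (SubdivRel V A x) γ ∧
      F 0 = Quot.mk (SubdivRel V A x) (constPathN V A x) ∧
      ∀ i ≤ γ.len, ∃ ρ : PathN V A x, ρ.len = i ∧ ρ.dir = d ∧
        (∀ k ≤ i, ρ.toFun k = γ.toFun k) ∧ F i = Quot.mk (SubdivRel V A x) ρ := by
  refine ⟨fun i => Quot.mk _ (truncP γ d hd i), ?_, ?_, ?_, ?_⟩
  · -- F is a digraph map
    intro v w hvw
    rcases hvw with ⟨h1, h2, h3⟩ | ⟨h1, h2, h3⟩
    · -- arrow v → v + 1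
      subst h1
      refine Or.inl ⟨⟨v + 1, d, fun k => γ.toFun (min k v),
        isDigraphMap_comp (shrink_min v d).1
          (fun a b hab => γ.ismap a b (by rw [hd]; exact lineAdj_mono h2.le hab)),
        by simpa using γ.base⟩, truncP γ d hd (v + 1), ?_, rfl, ?_, fun _ _ => rfl, ?_⟩
      · obtain ⟨ρ, hρmin, hρsub⟩ := exists_minimal (truncP γ d hd v)
        refine Quot.sound ⟨ρ, hρmin,
          subdivOf_trans (ψ := truncP γ d hd v) ⟨fun k => min k v, ?_, fun _ _ => rfl⟩ hρsub, hρsub⟩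
        show IsShrinking (v + 1) (min v γ.len) d d fun k => min k v
        rw [show min v γ.len = v by omega]
        exact shrink_min v d
      · show v + 1 = min (v + 1) γ.len
        omega
      · intro k hk
        replace hk : k ≤ v + 1 := hk
        show A (γ.toFun (min k v)) (γ.toFun k) ∨ γ.toFun (min k v) = γ.toFun k
        by_cases hkv : k ≤ v
        · rw [show min k v = k by omega]
          exact Or.inr rfl
        · have hkk : k = v + 1 := by omega
          subst hkk
          rw [show min (v + 1) v = v by omega]
          exact γ.ismap v (v + 1) (Or.inl ⟨rfl, h2, by rw [hd]; exact h3⟩)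
    · -- arrow w + 1 → w
      subst h1
      refine Or.inl ⟨truncP γ d hd (w + 1), ⟨w + 1, d, fun k => γ.toFun (min k w),
        isDigraphMap_comp (shrink_min w d).1
          (fun a b hab => γ.ismap a b (by rw [hd]; exact lineAdj_mono h2.le hab)),
        by simpa using γ.base⟩, rfl, ?_, ?_, fun _ _ => rfl, ?_⟩
      · obtain ⟨ρ, hρmin, hρsub⟩ := exists_minimal (truncP γ d hd w)
        refine Quot.sound ⟨ρ, hρmin,
          subdivOf_trans (ψ := truncP γ d hd w) ⟨fun k => min k w, ?_, fun _ _ => rfl⟩ hρsub, hρsub⟩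
        show IsShrinking (w + 1) (min w γ.len) d d fun k => min k w
        rw [show min w γ.len = w by omega]
        exact shrink_min w d
      · show min (w + 1) γ.len = w + 1
        omega
      · intro k hk
        replace hk : k ≤ min (w + 1) γ.len := hk
        have hk' : k ≤ w + 1 := by omega
        show A (γ.toFun k) (γ.toFun (min k w)) ∨ γ.toFun k = γ.toFun (min k w)
        by_cases hkv : k ≤ w
        · rw [show min k w = k by omega]
          exact Or.inr rfl
        · have hkk : k = w + 1 := by omega
          subst hkk
          rw [show min (w + 1) w = w by omega]
          exact γ.ismap (w + 1) w (Or.inr ⟨rfl, h2, by rw [hd]; exact h3⟩)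
  · -- F γ.len = ⟨γ⟩
    obtain ⟨L, dir, f, pm, pb⟩ := γ
    subst hd
    apply congrArg
    have key : ∀ (M : ℕ), M = L → ∀ (pm' : IsDigraphMap (lineAdj M dir) A f)
        (pb' : f 0 = x), (⟨M, dir, f, pm', pb'⟩ : PathN V A x) = ⟨L, dir, f, pm, pb⟩ := by
      rintro M rfl pm' pb'
      rfl
    exact key _ (Nat.min_self L) _ _
  · -- F 0 = ⟨l_*⟩
    refine Quot.sound ⟨constPathN V A x, fun i hi => absurd hi (Nat.not_lt_zero i),
      ⟨fun _ => 0, ⟨?_, rfl, rfl, fun _ _ _ _ => le_rfl⟩, ?_⟩,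
      ⟨fun _ => 0, ⟨fun a b hab => (lineAdj_zero hab).elim, rfl, rfl,
        fun _ _ _ _ => le_rfl⟩, fun _ _ => rfl⟩⟩
    · intro a b hab
      have hl : (truncP γ d hd 0).len = 0 := by
        show min 0 γ.len = 0
        omega
      rw [hl] at hab
      exact (lineAdj_zero hab).elim
    · intro i hi
      have hl : (truncP γ d hd 0).len = 0 := by
        show min 0 γ.len = 0
        omega
      have hi0 : i = 0 := by omega
      subst hi0
      exact γ.base
  · -- truncation description
    intro i hi
    exact ⟨truncP γ d hd i, by show min i γ.len = i; omega, rfl, fun _ _ => rfl, rfl⟩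

end Main

/-- Every vertex `⟨γ⟩` of the reduced path digraph `P̄G` (with `γ : J_m → G` a standard
path) is connected to the base-point `⟨l_∗⟩` by the digraph map `F : J_m → P̄G`,
`F i = ⟨γ|_{J_i}⟩`; hence `π̄₀(P̄G)` is trivial. -/
theorem stmt16 {V : Type*} (A : V → V → Prop) (x : V) (γ : PathN V A x)
    (hstd : γ.dir = Jdir) :
    (∃ F : ℕ → PbarV V A x,
      IsDigraphMap (lineAdj γ.len Jdir) (PbarAdj V A x) F ∧
      F γ.len = Quot.mk (SubdivRel V A x) γ ∧
      F 0 = Quot.mk (SubdivRel V A x) (constPathN V A x) ∧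
      ∀ i ≤ γ.len, ∃ ρ : PathN V A x, ρ.len = i ∧ ρ.dir = Jdir ∧
        (∀ k ≤ i, ρ.toFun k = γ.toFun k) ∧ F i = Quot.mk (SubdivRel V A x) ρ) ∧
    ∀ a : PbarV V A x, ∃ (k : ℕ) (d : ℕ → Bool) (α : ℕ → PbarV V A x),
      IsDigraphMap (lineAdj k d) (PbarAdj V A x) α ∧
        α 0 = Quot.mk (SubdivRel V A x) (constPathN V A x) ∧ α k = a := by
  refine ⟨main_lift γ Jdir hstd, ?_⟩
  intro a
  induction a using Quot.ind with
  | mk ψ =>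
    obtain ⟨F, Fmap, FL, F0, _⟩ := main_lift ψ ψ.dir rfl
    exact ⟨ψ.len, ψ.dir, F, Fmap, F0, FL⟩
end
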